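/- arXiv:1205.4003 — 4 statements merged into one kernel-verified Lean document; each statement's English description precedes it below -/
import Mathlib

section
/- Fix q, t with 0 ≤ |q| < t, n ∈ ℕ, and a pair partition V = {(w_1,z_1),…,(w_n,z_n)} ∈ 𝒫₂(2n), with ε(1), …, ε(2n) ∈ {1,*} such that (ε(w_i), ε(z_i)) = (1,*) for every block. Let {μ(i,j)}_{1≤i<j} be independent, identically distributed, almost surely non-vanishing real random variables with E[μ(i,j)] = q/t and E[μ(i,j)²] = 1, and populate the coefficients μ_{ε,ε'}(i,j) by the standard prescription. Define the random variable X_N := N^{−n} Σ_{(i(1),…,i(2n)) ∈ [N]^{2n}, (i(1),…,i(2n)) ~ V} [ Π_{(w_j,w_k,z_j,z_k) ∈ Cross(V)} μ_{ε(z_j),ε(w_k)}(i(z_j),i(w_k)) ] · [ Π_{(w_ℓ,w_m,z_m,z_ℓ) ∈ Nest(V)} μ_{ε(z_ℓ),ε(z_m)}(i(z_ℓ),i(z_m)) · μ_{ε(z_ℓ),ε(w_m)}(i(z_ℓ),i(w_m)) ]. Then E[X_N] = q^{cross(V)} t^{nest(V)} · N^{−n} · C(N,n) · n!, and consequently lim_{N→∞}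 E[X_N] = q^{cross(V)} t^{nest(V)}. -/
open Filter MeasureTheory ProbabilityTheory
open scoped BigOperators ComplexOrder Classical

noncomputable section

/-- `sel a e` is `a^ε`: `a` if `e = false` (i.e. ε = 1) and `star a` if `e = true` (i.e. ε = ∗). -/
def sel {A : Type*} [Star A] (a : A) (e : Bool) : A := if e then star a else a

/-- The product `b_{i(1)}^{ε(1)} ⋯ b_{i(r)}^{ε(r)}`, indexed by a list of (index, exponent) pairs. -/
def listProd {A : Type*} [Monoid A] [Star A] (b : ℕ → A) (l : List (ℕ × Bool)) : A :=
  (l.map fun p => sel (b p.1) p.2).prod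

/-- The product `b_{i(1)}^{ε(1)} ⋯ b_{i(r)}^{ε(r)}`, indexed by `Fin r`. -/
def tupProd {A : Type*} [Monoid A] [Star A] (b : ℕ → A) {r : ℕ}
    (i : Fin r → ℕ) (eps : Fin r → Bool) : A :=
  (List.ofFn fun k => sel (b (i k)) (eps k)).prod

/-- The mixed moment `φ(X^{ε(1)} ⋯ X^{ε(r)})` of a single element `X`. -/
def smom {A : Type*} [Ring A] [StarRing A] [Algebra ℂ A] (φ : A →ₗ[ℂ] ℂ)
    (X : A) {r : ℕ} (eps : Fin r → Bool) : ℂ :=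
  φ ((List.ofFn fun k => sel X (eps k)).prod)

/-- The commutation coefficients are nonzero reals. -/
def NonzeroCoeff (c : Bool → Bool → ℕ → ℕ → ℝ) : Prop :=
  ∀ i j : ℕ, i ≠ j → ∀ e e' : Bool, c e e' i j ≠ 0

/-- Relations (A)–(B) on the commutation coefficients (`false` = 1, `true` = ∗):
`μ_{ε,ε'}(i,j) = 1/μ_{ε',ε}(j,i)`, `μ_{1,1}(i,j) = 1/μ_{∗,∗}(i,j)`,
`μ_{1,∗}(i,j) = 1/μ_{∗,1}(i,j)`. -/
def RelAB (c : Bool → Bool → ℕ → ℕ → ℝ) : Prop :=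
  (∀ i j : ℕ, i ≠ j → ∀ e e' : Bool, c e e' i j = (c e' e j i)⁻¹) ∧
  (∀ i j : ℕ, i ≠ j → c false false i j = (c true true i j)⁻¹) ∧
  (∀ i j : ℕ, i ≠ j → c false true i j = (c true false i j)⁻¹)

/-- Condition (★) for a sequence `b` in a complex ∗-probability space, with
commutation coefficients `c e e' i j = μ_{ε,ε'}(i,j)` (`false` = 1, `true` = ∗).
The factoring over naturally ordered products is stated in block form: a naturally
ordered product is a concatenation of nonempty blocks with constant indices, the
(distinct) block indices being strictly increasing. -/
structure StarCond {A : Type*} [Ring A] [StarRing A] [Algebra ℂ A]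
    (φ : A →ₗ[ℂ] ℂ) (b : ℕ → A) (c : Bool → Bool → ℕ → ℕ → ℝ) : Prop where
  zero_mean : ∀ i, φ (b i) = 0
  zero_mean_star : ∀ i, φ (star (b i)) = 0
  zero_bb : ∀ i, φ (b i * b i) = 0
  zero_ss : ∀ i, φ (star (b i) * star (b i)) = 0
  zero_sb : ∀ i, φ (star (b i) * b i) = 0
  covar : ∀ i j : ℕ, ∀ e e' : Bool,
    φ (sel (b i) e * sel (b i) e') = φ (sel (b j) e * sel (b j) e')
  bounded : ∀ r : ℕ, ∃ α : ℝ, 0 ≤ α ∧ ∀ l : List (ℕ × Bool), l.length = r →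
    ‖φ (listProd b l)‖ ≤ α
  factors : ∀ L : List (ℕ × List Bool),
    List.Chain' (· < ·) (L.map Prod.fst) → (∀ p ∈ L, p.2 ≠ []) →
    φ ((L.map fun p => (p.2.map (sel (b p.1))).prod).prod)
      = (L.map fun p => φ ((p.2.map (sel (b p.1))).prod)).prod
  commRel : ∀ i j : ℕ, i ≠ j → ∀ e e' : Bool,
    sel (b i) e * sel (b j) e' = ((c e' e j i : ℝ) : ℂ) • (sel (b j) e' * sel (b i) e)

/-- The normalized partial sum `S_N = (b 1 + ⋯ + b N)/√N`. -/
def pSum {A : Type*} [Ring A] [Algebra ℂ A] (b : ℕ → A) (N : ℕ) : A :=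
  (((Real.sqrt N)⁻¹ : ℝ) : ℂ) • ∑ i ∈ Finset.Icc 1 N, b i

/-- A pair partition `V = {(w 1, z 1), …, (w n, z n)}` of `{1, …, 2n}` (here of `Fin (2n)`),
with `w i < z i`, `w` strictly increasing, and the `w i, z i` exhausting `Fin (2n)`. -/
structure PairPartition (n : ℕ) where
  w : Fin n → Fin (2 * n)
  z : Fin n → Fin (2 * n)
  wz : ∀ i, w i < z i
  mono : StrictMono w
  bij : Function.Bijective fun p : Fin n × Bool => if p.2 then z p.1 else w p.1

instance (n : ℕ) : Fintype (PairPartition n) :=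
  Fintype.ofInjective (fun V : PairPartition n => (V.w, V.z)) (by
    rintro ⟨w₁, z₁, h₁, h₂, h₃⟩ ⟨w₂, z₂, g₁, g₂, g₃⟩ h
    simp only [Prod.mk.injEq] at h
    obtain ⟨rfl, rfl⟩ := h
    rfl)

/-- The crossings of a pair partition: pairs of blocks `(j, k)` with `w j < w k < z j < z k`. -/
def crossSet {n : ℕ} (V : PairPartition n) : Finset (Fin n × Fin n) :=
  Finset.univ.filter fun p => V.w p.1 < V.w p.2 ∧ V.w p.2 < V.z p.1 ∧ V.z p.1 < V.z p.2

/-- The nestings of a pair partition: pairs of blocks `(j, m)` with `w j < w m < z m < z j`. -/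
def nestSet {n : ℕ} (V : PairPartition n) : Finset (Fin n × Fin n) :=
  Finset.univ.filter fun p => V.w p.1 < V.w p.2 ∧ V.w p.2 < V.z p.2 ∧ V.z p.2 < V.z p.1

/-- `cross(V)`, the number of crossings. -/
def crossNum {n : ℕ} (V : PairPartition n) : ℕ := (crossSet V).card

/-- `nest(V)`, the number of nestings. -/
def nestNum {n : ℕ} (V : PairPartition n) : ℕ := (nestSet V).card

/-- Two positions lie in the same block of the pair partition `V`. -/
def sameBlock {n : ℕ} (V : PairPartition n) (k₁ k₂ : Fin (2 * n)) : Prop :=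
  k₁ = k₂ ∨ ∃ m, (k₁ = V.w m ∧ k₂ = V.z m) ∨ (k₁ = V.z m ∧ k₂ = V.w m)

/-- `(i(1), …, i(2n)) ∼ V`: entries agree exactly on the blocks of `V`. -/
def tupleEquiv {n : ℕ} {α : Type*} (V : PairPartition n) (i : Fin (2 * n) → α) : Prop :=
  ∀ k₁ k₂, i k₁ = i k₂ ↔ sameBlock V k₁ k₂

/-- The tuples in `[N]^{2n} = {1, …, N}^{2n}` that are equivalent to `V`. -/
def tuples (n N : ℕ) (V : PairPartition n) : Finset (Fin (2 * n) → ℕ) :=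
  (Fintype.piFinset fun _ : Fin (2 * n) => Finset.Icc 1 N).filter fun i => tupleEquiv V i

/-- `β^{ε(1),…,ε(2n)}_{i(1),…,i(2n)}`: the product over crossings of `V` of
`μ_{ε(z_j),ε(w_k)}(i(z_j),i(w_k))` times the product over nestings of `V` of
`μ_{ε(z_j),ε(z_m)}(i(z_j),i(z_m)) · μ_{ε(z_j),ε(w_m)}(i(z_j),i(w_m))`. -/
def betaProd (n : ℕ) (V : PairPartition n) (eps : Fin (2 * n) → Bool)
    (c : Bool → Bool → ℕ → ℕ → ℝ) (i : Fin (2 * n) → ℕ) : ℝ :=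
  (∏ p ∈ crossSet V, c (eps (V.z p.1)) (eps (V.w p.2)) (i (V.z p.1)) (i (V.w p.2))) *
  ∏ p ∈ nestSet V,
    c (eps (V.z p.1)) (eps (V.z p.2)) (i (V.z p.1)) (i (V.z p.2)) *
      c (eps (V.z p.1)) (eps (V.w p.2)) (i (V.z p.1)) (i (V.w p.2))

/-- `X_N = N^{-n} Σ_{(i(1),…,i(2n)) ∼ V} β^{ε(1),…,ε(2n)}_{i(1),…,i(2n)}`, whose limit
(when it exists) is `λ_{V,ε(1),…,ε(2n)}`. -/
def lambdaSum (n : ℕ) (V : PairPartition n) (eps : Fin (2 * n) → Bool)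
    (c : Bool → Bool → ℕ → ℕ → ℝ) (N : ℕ) : ℝ :=
  ((N : ℝ)⁻¹) ^ n * ∑ i ∈ tuples n N V, betaProd n V eps c i

/-- One-pair standard prescription: for `x = μ(i,j)` (with `i < j`),
`μ_{∗,∗} = x`, `μ_{∗,1} = t·x`, `μ_{1,1} = x⁻¹`, `μ_{1,∗} = (t·x)⁻¹`. -/
def prescOne (t x : ℝ) (e e' : Bool) : ℝ :=
  if e then (if e' then x else t * x) else (if e' then (t * x)⁻¹ else x⁻¹)

/-- The standard prescription of commutation coefficients from `{μ(i,j)}_{i<j}`,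
extended to `i > j` by `μ_{ε',ε}(j,i) = 1/μ_{ε,ε'}(i,j)`. -/
def presc (t : ℝ) (m : ℕ → ℕ → ℝ) (e e' : Bool) (i j : ℕ) : ℝ :=
  if i < j then prescOne t (m i j) e e' else (prescOne t (m j i) e' e)⁻¹

/-- The index set `{(i,j) : 1 ≤ i < j}` of the random commutation coefficients. -/
def PairIdx : Type := {p : ℕ × ℕ // 1 ≤ p.1 ∧ p.1 < p.2}

/-- `σ_x = [[1,0],[0,√t·x]]`. -/
def sigmaM (t x : ℝ) : Matrix (Fin 2) (Fin 2) ℝ := !![1, 0; 0, Real.sqrt t * x]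

/-- `γ = [[0,1],[0,0]]`. -/
def gammaM : Matrix (Fin 2) (Fin 2) ℝ := !![0, 1; 0, 0]

/-- The two-parameter Jordan–Wigner matrix
`b_{n,i} = σ_{μ(1,i)} ⊗ ⋯ ⊗ σ_{μ(i-1,i)} ⊗ γ ⊗ σ₁^{⊗(n-i)} ∈ M₂(ℝ)^{⊗n}`,
realized on the index set `Fin n → Fin 2` (tensor/Kronecker products of matrices
have entries the products of the entries of the factors). -/
def jw (t : ℝ) (m : ℕ → ℕ → ℝ) (n i : ℕ) : Matrix (Fin n → Fin 2) (Fin n → Fin 2) ℝ :=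
  Matrix.of fun x y => ∏ k : Fin n,
    (if (k : ℕ) + 1 < i then sigmaM t (m ((k : ℕ) + 1) i)
     else if (k : ℕ) + 1 = i then gammaM
     else sigmaM t 1) (x k) (y k)

/-- `φ_n(a) = ⟨a e₀, e₀⟩ = a₀₀`. -/
def phiM (n : ℕ) (a : Matrix (Fin n → Fin 2) (Fin n → Fin 2) ℝ) : ℝ :=
  a (fun _ => 0) (fun _ => 0)

/-- The normalized partial sum `S_N = (b_{N,1} + ⋯ + b_{N,N})/√N` of Jordan–Wigner matrices. -/
def jwS (t : ℝ) (m : ℕ → ℕ → ℝ) (N : ℕ) : Matrix (Fin N → Fin 2) (Fin N → Fin 2) ℝ :=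
  (Real.sqrt N)⁻¹ • ∑ i ∈ Finset.Icc 1 N, jw t m N i

/-! For a tuple `i ∼ V` let `v m` be the common value of `i` on the `m`-th block; these values
are distinct. With the pattern `(ε(w), ε(z)) = (1, ∗)` a crossing of the blocks `j, k` contributes
`μ_{∗,1}(v j, v k) = t μ`, and a nesting contributes `μ_{∗,∗} μ_{∗,1}(v j, v m)`, which is `t μ²`
or (as `μ ≠ 0` a.s.) `t`, according as `v j < v m` or `v j > v m`; here `μ` is the coefficient
attached to the unordered pair `{v j, v m}`. Distinct pairs of blocks give distinct unordered
pairs, so by independence every tuple has expectation `q ^ cross(V) * t ^ nest(V)`, and there are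
`N (N - 1) ⋯ (N - n + 1)` tuples. -/

section Independence

variable {Ω : Type*} {mΩ : MeasurableSpace Ω} {μ : Measure Ω}

theorem ProbabilityTheory.iIndepFun.integrable_finset_prod {ι : Type*} {X : ι → Ω → ℝ}
    (hX : iIndepFun X μ) (hint : ∀ i, Integrable (X i) μ) (s : Finset ι) :
    Integrable (∏ i ∈ s, X i) μ := by
  have := hX.isProbabilityMeasure
  induction s using Finset.induction_on with
  | empty => rw [Finset.prod_empty]; exact integrable_const (1 : ℝ)
  | insert a s has ih =>
    rw [Finset.prod_insert has, mul_comm]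
    exact (hX.indepFun_finsetProd_of_notMem₀ (fun i => (hint i).aemeasurable) has).integrable_mul
      ih (hint a)

theorem ProbabilityTheory.iIndepFun.integral_finset_prod_comp {ι κ : Type*} {X : ι → Ω → ℝ}
    (hX : iIndepFun X μ) {s : Finset κ} {π : κ → ι} (hπ : Set.InjOn π s) {g : κ → ℝ → ℝ}
    (hg : ∀ k, Measurable (g k)) (hint : ∀ k ∈ s, Integrable (fun ω => g k (X (π k) ω)) μ) :
    Integrable (fun ω => ∏ k ∈ s, g k (X (π k) ω)) μ ∧
      ∫ ω, ∏ k ∈ s, g k (X (π k) ω) ∂μ = ∏ k ∈ s, ∫ ω, g k (X (π k) ω) ∂μ := by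
  have hY : iIndepFun (fun k : s => fun ω => g k (X (π k) ω)) μ :=
    (hX.precomp hπ.injective).comp (fun k => g k) fun k => hg k
  simp only [← Finset.prod_coe_sort s]
  refine ⟨?_, hY.integral_fun_prod_eq_prod_integral fun k => (hint k k.2).1⟩
  simpa [Finset.prod_fn] using hY.integrable_finset_prod (fun k => hint k k.2) Finset.univ

end Independence

namespace PairPartition

variable {n : ℕ} (V : PairPartition n)

def block (k : Fin (2 * n)) : Fin n := ((Equiv.ofBijective _ V.bij).symm k).1

@[simp]
lemma block_w (m : Fin n) : V.block (V.w m) = m :=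
  congrArg Prod.fst ((Equiv.ofBijective _ V.bij).symm_apply_apply (m, false))

@[simp]
lemma block_z (m : Fin n) : V.block (V.z m) = m :=
  congrArg Prod.fst ((Equiv.ofBijective _ V.bij).symm_apply_apply (m, true))

lemma sameBlock_iff {k₁ k₂ : Fin (2 * n)} : sameBlock V k₁ k₂ ↔ V.block k₁ = V.block k₂ := by
  constructor
  · rintro (rfl | ⟨m, ⟨rfl, rfl⟩ | ⟨rfl, rfl⟩⟩) <;> simp
  · obtain ⟨⟨m₁, b₁⟩, rfl⟩ := V.bij.2 k₁
    obtain ⟨⟨m₂, b₂⟩, rfl⟩ := V.bij.2 k₂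
    intro h
    cases b₁ <;> cases b₂ <;>
      simp only [Bool.false_eq_true, if_true, if_false, block_w, block_z] at h ⊢ <;> subst h
    exacts [Or.inl rfl, Or.inr ⟨_, Or.inl ⟨rfl, rfl⟩⟩, Or.inr ⟨_, Or.inr ⟨rfl, rfl⟩⟩, Or.inl rfl]

variable {V} {α : Type*} {i : Fin (2 * n) → α}

lemma apply_z_eq_apply_w (hi : tupleEquiv V i) (m : Fin n) : i (V.z m) = i (V.w m) :=
  (hi _ _).2 (Or.inr ⟨m, Or.inr ⟨rfl, rfl⟩⟩)

lemma injective_apply_w (hi : tupleEquiv V i) : Function.Injective fun m => i (V.w m) :=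
  fun j k h => by simpa using V.sameBlock_iff.1 ((hi _ _).1 h)

lemma lt_of_mem_crossSet_union_nestSet {p : Fin n × Fin n}
    (hp : p ∈ crossSet V ∪ nestSet V) : p.1 < p.2 := by
  rw [← V.mono.lt_iff_lt]
  simp only [crossSet, nestSet, Finset.mem_union, Finset.mem_filter] at hp
  rcases hp with ⟨-, h, -⟩ | ⟨-, h, -⟩ <;> exact h

lemma disjoint_crossSet_nestSet : Disjoint (crossSet V) (nestSet V) := by
  simp only [crossSet, nestSet]
  exact Finset.disjoint_filter.2 fun p _ hc hn => lt_asymm hc.2.2 hn.2.2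

end PairPartition

open PairPartition

lemma mem_tuples {n N : ℕ} {V : PairPartition n} {i : Fin (2 * n) → ℕ} :
    i ∈ tuples n N V ↔ (∀ k, 1 ≤ i k ∧ i k ≤ N) ∧ tupleEquiv V i := by
  simp [tuples, Fintype.mem_piFinset]

lemma card_tuples (n N : ℕ) (V : PairPartition n) :
    (tuples n N V).card = N.descFactorial n := by
  -- the tuples `i ∼ V` are the `v ∘ V.block` with `v : Fin n ↪ [N]`
  have hcard : (Finset.univ : Finset (Fin n ↪ Finset.Icc 1 N)).card = (tuples n N V).card := by
    refine Finset.card_bij (fun v _ k => (v (V.block k) : ℕ)) (fun v _ => ?_)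
      (fun v _ v' _ h => ?_) (fun i hi => ?_)
    · refine mem_tuples.2 ⟨fun k => Finset.mem_Icc.1 (v _).2, fun k₁ k₂ => ?_⟩
      rw [V.sameBlock_iff, Subtype.coe_inj, v.injective.eq_iff]
    · ext m : 2
      simpa using congrFun h (V.w m)
    · obtain ⟨hrange, hequiv⟩ := mem_tuples.1 hi
      refine ⟨⟨fun m => ⟨i (V.w m), Finset.mem_Icc.2 (hrange _)⟩,
        fun j k h => injective_apply_w hequiv (congrArg Subtype.val h)⟩, Finset.mem_univ _, ?_⟩
      funext k
      exact (hequiv _ _).2 (V.sameBlock_iff.2 (V.block_w _))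
  rw [← hcard, Finset.card_univ, Fintype.card_embedding_eq, Fintype.card_fin, Fintype.card_coe,
    Nat.card_Icc, Nat.add_sub_cancel]

lemma betaProd_eq_of_tupleEquiv {n : ℕ} {V : PairPartition n} {eps : Fin (2 * n) → Bool}
    (heps : ∀ m : Fin n, eps (V.w m) = false ∧ eps (V.z m) = true)
    (c : Bool → Bool → ℕ → ℕ → ℝ) {i : Fin (2 * n) → ℕ} (hi : tupleEquiv V i) :
    betaProd n V eps c i =
      (∏ p ∈ crossSet V, c true false (i (V.w p.1)) (i (V.w p.2))) *
        ∏ p ∈ nestSet V, c true true (i (V.w p.1)) (i (V.w p.2)) *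
          c true false (i (V.w p.1)) (i (V.w p.2)) := by
  simp only [betaProd, heps, apply_z_eq_apply_w hi]

lemma presc_true_false (t : ℝ) (m : ℕ → ℕ → ℝ) (a b : ℕ) :
    presc t m true false a b = t * m (min a b) (max a b) := by
  rcases lt_or_ge a b with h | h
  · simp [presc, prescOne, h, h.le]
  · simp [presc, prescOne, h, h.not_gt]

lemma presc_true_true (t : ℝ) (m : ℕ → ℕ → ℝ) (a b : ℕ) :
    presc t m true true a b =
      if a < b then m (min a b) (max a b) else (m (min a b) (max a b))⁻¹ := by
  rcases lt_or_ge a b with h | h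
  · simp [presc, prescOne, h, h.le]
  · simp [presc, prescOne, h, h.not_gt]

/-- The index of the unordered pair `{a, b}`; the junk value `(1, 2)` is taken only when `a = b`
or `min a b = 0`. -/
def PairIdx.sort (a b : ℕ) : PairIdx :=
  if h : 1 ≤ min a b ∧ min a b < max a b then ⟨(min a b, max a b), h⟩ else ⟨(1, 2), by norm_num⟩

lemma PairIdx.sort_val {a b : ℕ} (ha : 1 ≤ a) (hb : 1 ≤ b) (hab : a ≠ b) :
    (PairIdx.sort a b).1 = (min a b, max a b) := by
  have h : 1 ≤ min a b ∧ min a b < max a b := ⟨le_min ha hb, min_lt_max.2 hab⟩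
  simp [PairIdx.sort, h]

lemma PairIdx.injOn_sort {κ : Type*} [LinearOrder κ] {v : κ → ℕ} (hv : Function.Injective v)
    (hv1 : ∀ k, 1 ≤ v k) :
    Set.InjOn (fun p : κ × κ => PairIdx.sort (v p.1) (v p.2)) {p | p.1 < p.2} := by
  rintro ⟨a, b⟩ (hab : a < b) ⟨a', b'⟩ (hab' : a' < b') h
  have hval := congrArg Subtype.val h
  simp only [PairIdx.sort_val (hv1 _) (hv1 _) (hv.ne hab.ne),
    PairIdx.sort_val (hv1 _) (hv1 _) (hv.ne hab'.ne), Prod.mk.injEq] at hval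
  have : (v a = v a' ∧ v b = v b') ∨ (v a = v b' ∧ v b = v a') := by omega
  rcases this with ⟨h₁, h₂⟩ | ⟨h₁, h₂⟩
  · rw [hv h₁, hv h₂]
  · exact absurd (hab.trans (hv h₂ ▸ hab')) (hv h₁ ▸ lt_irrefl a)

/-- The factor of `betaProd` contributed by the crossing or nesting `p` of a tuple with block
values `v`, as a function of the coefficient `x = μ(min, max)` of the pair `{v p.1, v p.2}`. -/
def blockPairFactor {n : ℕ} (V : PairPartition n) (v : Fin n → ℕ) (t : ℝ) (p : Fin n × Fin n)
    (x : ℝ) : ℝ :=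
  if p ∈ crossSet V then t * x else (if v p.1 < v p.2 then x else x⁻¹) * (t * x)

lemma measurable_blockPairFactor {n : ℕ} (V : PairPartition n) (v : Fin n → ℕ) (t : ℝ)
    (p : Fin n × Fin n) : Measurable (blockPairFactor V v t p) := by
  unfold blockPairFactor
  split_ifs <;> fun_prop

section Moments

variable {Ω : Type*} [MeasureSpace Ω] [IsProbabilityMeasure (ℙ : Measure Ω)] {X : Ω → ℝ}

lemma integral_blockPairFactor {q t : ℝ} (ht : t ≠ 0) (hnz : ∀ᵐ ω ∂ℙ, X ω ≠ 0)
    (hL2 : MemLp X 2 ℙ) (hmean : ∫ ω, X ω ∂ℙ = q / t) (hsq : ∫ ω, X ω ^ 2 ∂ℙ = 1)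
    {n : ℕ} (V : PairPartition n) (v : Fin n → ℕ) (p : Fin n × Fin n) :
    Integrable (fun ω => blockPairFactor V v t p (X ω)) ℙ ∧
      ∫ ω, blockPairFactor V v t p (X ω) ∂ℙ = if p ∈ crossSet V then q else t := by
  by_cases hc : p ∈ crossSet V
  · simp only [blockPairFactor, if_pos hc]
    refine ⟨(hL2.integrable one_le_two).const_mul t, ?_⟩
    rw [integral_const_mul, hmean, mul_div_cancel₀ q ht]
  simp only [blockPairFactor, if_neg hc]
  by_cases hlt : v p.1 < v p.2
  · simp only [if_pos hlt]
    have hsq' : (fun ω => X ω * (t * X ω)) = fun ω => t * X ω ^ 2 := by ext; ring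
    rw [hsq']
    refine ⟨hL2.integrable_sq.const_mul t, ?_⟩
    rw [integral_const_mul, hsq, mul_one]
  · simp only [if_neg hlt]
    have hae : (fun _ => t) =ᵐ[ℙ] fun ω => (X ω)⁻¹ * (t * X ω) :=
      hnz.mono fun ω h => by field_simp
    exact ⟨(integrable_const t).congr hae, by rw [← integral_congr_ae hae]; simp⟩

end Moments

lemma integral_betaProd_presc {Ω : Type*} [MeasureSpace Ω] [IsProbabilityMeasure (ℙ : Measure Ω)]
    {q t : ℝ} (ht : t ≠ 0) {μr : ℕ → ℕ → Ω → ℝ}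
    (hindep : iIndepFun (m := fun _ : PairIdx => (inferInstance : MeasurableSpace ℝ))
      (fun p : PairIdx => fun ω => μr p.1.1 p.1.2 ω) ℙ)
    (hnz : ∀ p : PairIdx, ∀ᵐ ω ∂ℙ, μr p.1.1 p.1.2 ω ≠ 0)
    (hL2 : ∀ p : PairIdx, MemLp (fun ω => μr p.1.1 p.1.2 ω) 2 ℙ)
    (hmean : ∀ p : PairIdx, ∫ ω, μr p.1.1 p.1.2 ω ∂ℙ = q / t)
    (hsq : ∀ p : PairIdx, ∫ ω, (μr p.1.1 p.1.2 ω) ^ 2 ∂ℙ = 1)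
    {n N : ℕ} {V : PairPartition n} {eps : Fin (2 * n) → Bool}
    (heps : ∀ m : Fin n, eps (V.w m) = false ∧ eps (V.z m) = true)
    {i : Fin (2 * n) → ℕ} (hi : i ∈ tuples n N V) :
    Integrable (fun ω => betaProd n V eps (presc t fun a b => μr a b ω) i) ℙ ∧
      ∫ ω, betaProd n V eps (presc t fun a b => μr a b ω) i ∂ℙ
        = q ^ crossNum V * t ^ nestNum V := by
  obtain ⟨hrange, hequiv⟩ := mem_tuples.1 hi
  set v : Fin n → ℕ := fun m => i (V.w m)
  have hv1 : ∀ m, 1 ≤ v m := fun m => (hrange _).1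
  set π : Fin n × Fin n → PairIdx := fun p => PairIdx.sort (v p.1) (v p.2)
  have hcoeff : ∀ p ∈ crossSet V ∪ nestSet V, ∀ ω,
      μr (min (v p.1) (v p.2)) (max (v p.1) (v p.2)) ω = μr (π p).1.1 (π p).1.2 ω := by
    intro p hp ω
    have hne := (injective_apply_w hequiv).ne (lt_of_mem_crossSet_union_nestSet hp).ne
    simp only [π, PairIdx.sort_val (hv1 _) (hv1 _) hne]
  have hβ : ∀ ω, betaProd n V eps (presc t fun a b => μr a b ω) i =
      ∏ p ∈ crossSet V ∪ nestSet V, blockPairFactor V v t p (μr (π p).1.1 (π p).1.2 ω) := by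
    intro ω
    rw [betaProd_eq_of_tupleEquiv heps _ hequiv, Finset.prod_union disjoint_crossSet_nestSet]
    simp only [presc_true_false, presc_true_true]
    congr 1 <;> refine Finset.prod_congr rfl fun p hp => ?_
    · rw [hcoeff p (Finset.mem_union_left _ hp), blockPairFactor, if_pos hp]
    · rw [hcoeff p (Finset.mem_union_right _ hp), blockPairFactor,
        if_neg (Finset.disjoint_right.1 disjoint_crossSet_nestSet hp)]
  have hfactor := fun p => integral_blockPairFactor ht (hnz (π p)) (hL2 (π p)) (hmean (π p))
    (hsq (π p)) V v p
  obtain ⟨hint, hintegral⟩ := hindep.integral_finset_prod_comp (s := crossSet V ∪ nestSet V)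
    ((PairIdx.injOn_sort (injective_apply_w hequiv) hv1).mono
      fun p hp => lt_of_mem_crossSet_union_nestSet (Finset.mem_coe.1 hp))
    (measurable_blockPairFactor V v t) fun p _ => (hfactor p).1
  simp only [hβ]
  refine ⟨hint, hintegral.trans ?_⟩
  rw [Finset.prod_congr rfl fun p _ => (hfactor p).2, Finset.prod_union disjoint_crossSet_nestSet,
    Finset.prod_congr rfl fun p hp => if_pos hp,
    Finset.prod_congr rfl fun p hp => if_neg (Finset.disjoint_right.1 disjoint_crossSet_nestSet hp),
    Finset.prod_const, Finset.prod_const, crossNum, nestNum]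

lemma tendsto_descFactorial_div_pow (n : ℕ) :
    Tendsto (fun N : ℕ => (N.descFactorial n : ℝ) / (N : ℝ) ^ n) atTop (nhds 1) :=
  (Asymptotics.isEquivalent_iff_tendsto_one
    ((eventually_ne_atTop 0).mono fun _ hN => pow_ne_zero n (Nat.cast_ne_zero.2 hN))).1
    (isEquivalent_descFactorial n)

theorem expectation_of_XN_general
    (q t : ℝ) (hqt : |q| < t)
{Ω : Type*} [MeasureSpace Ω] [IsProbabilityMeasure (ℙ : Measure Ω)]
    (μr : ℕ → ℕ → Ω → ℝ)
    (hindep : iIndepFun (m := fun _ : PairIdx => (inferInstance : MeasurableSpace ℝ))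
      (fun p : PairIdx => fun ω => μr p.1.1 p.1.2 ω) ℙ)
    (hnz : ∀ p : PairIdx, ∀ᵐ ω ∂ℙ, μr p.1.1 p.1.2 ω ≠ 0)
    (hL2 : ∀ p : PairIdx, MemLp (fun ω => μr p.1.1 p.1.2 ω) 2 ℙ)
    (hmean : ∀ p : PairIdx, ∫ ω, μr p.1.1 p.1.2 ω ∂ℙ = q / t)
    (hsq : ∀ p : PairIdx, ∫ ω, (μr p.1.1 p.1.2 ω) ^ 2 ∂ℙ = 1)
    (n : ℕ) (V : PairPartition n) (eps : Fin (2 * n) → Bool)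
    (heps : ∀ m : Fin n, eps (V.w m) = false ∧ eps (V.z m) = true) :
    (∀ N : ℕ,
      ∫ ω, lambdaSum n V eps (presc t fun i j => μr i j ω) N ∂(ℙ : Measure Ω)
        = q ^ crossNum V * t ^ nestNum V * ((N : ℝ)⁻¹) ^ n * (N.choose n) * n.factorial) ∧
    Tendsto
      (fun N : ℕ => ∫ ω, lambdaSum n V eps (presc t fun i j => μr i j ω) N ∂(ℙ : Measure Ω))
      atTop (nhds (q ^ crossNum V * t ^ nestNum V)) := by
  have ht : t ≠ 0 := ((abs_nonneg q).trans_lt hqt).ne'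
  have hE : ∀ N : ℕ,
      ∫ ω, lambdaSum n V eps (presc t fun i j => μr i j ω) N ∂(ℙ : Measure Ω)
        = q ^ crossNum V * t ^ nestNum V * ((N : ℝ)⁻¹) ^ n * (N.choose n) * n.factorial := by
    intro N
    have hβ := fun i (hi : i ∈ tuples n N V) =>
      integral_betaProd_presc ht hindep hnz hL2 hmean hsq heps hi
    simp only [lambdaSum]
    rw [integral_const_mul, integral_finsetSum _ fun i hi => (hβ i hi).1,
      Finset.sum_congr rfl fun i hi => (hβ i hi).2, Finset.sum_const, card_tuples, nsmul_eq_mul,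
      Nat.descFactorial_eq_factorial_mul_choose]
    push_cast
    ring
  have hlim := (tendsto_descFactorial_div_pow n).const_mul (q ^ crossNum V * t ^ nestNum V)
  rw [mul_one] at hlim
  refine ⟨hE, hlim.congr fun N => ?_⟩
  rw [hE, Nat.descFactorial_eq_factorial_mul_choose]
  push_cast
  ring

/-- with every block of `V` carrying the exponent pattern (1, ∗),
`E[X_N] = q^cross(V) t^nest(V) · N^{-n} · C(N,n) · n!`, and consequently
`E[X_N] → q^cross(V) t^nest(V)` as `N → ∞`. -/
theorem expectation_of_XN
    (q t : ℝ) (hqt : |q| < t)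
{Ω : Type*} [MeasureSpace Ω] [IsProbabilityMeasure (ℙ : Measure Ω)]
    (μr : ℕ → ℕ → Ω → ℝ)
    (hmeas : ∀ p : PairIdx, Measurable fun ω => μr p.1.1 p.1.2 ω)
    (hindep : iIndepFun (m := fun _ : PairIdx => (inferInstance : MeasurableSpace ℝ))
      (fun p : PairIdx => fun ω => μr p.1.1 p.1.2 ω) ℙ)
    (hident : ∀ p p' : PairIdx,
      IdentDistrib (fun ω => μr p.1.1 p.1.2 ω) (fun ω => μr p'.1.1 p'.1.2 ω) ℙ ℙ)
    (hnz : ∀ p : PairIdx, ∀ᵐ ω ∂ℙ, μr p.1.1 p.1.2 ω ≠ 0)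
    (hL2 : ∀ p : PairIdx, MemLp (fun ω => μr p.1.1 p.1.2 ω) 2 ℙ)
    (hmean : ∀ p : PairIdx, ∫ ω, μr p.1.1 p.1.2 ω ∂ℙ = q / t)
    (hsq : ∀ p : PairIdx, ∫ ω, (μr p.1.1 p.1.2 ω) ^ 2 ∂ℙ = 1)
    (n : ℕ) (V : PairPartition n) (eps : Fin (2 * n) → Bool)
    (heps : ∀ m : Fin n, eps (V.w m) = false ∧ eps (V.z m) = true) :
    (∀ N : ℕ,
      ∫ ω, lambdaSum n V eps (presc t fun i j => μr i j ω) N ∂(ℙ : Measure Ω)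
        = q ^ crossNum V * t ^ nestNum V * ((N : ℝ)⁻¹) ^ n * (N.choose n) * n.factorial) ∧
    Tendsto
      (fun N : ℕ => ∫ ω, lambdaSum n V eps (presc t fun i j => μr i j ω) N ∂(ℙ : Measure Ω))
      atTop (nhds (q ^ crossNum V * t ^ nestNum V)) :=
  expectation_of_XN_general q t hqt μr hindep hnz hL2 hmean hsq n V eps heps
end
end

section
/- Fix t > 0 and a family of nonzero real numbers {μ(i,j)}_{i<j}, and populate coefficients μ_{ε,ε'}(i,j) for all i ≠ j, ε, ε' ∈ {1,*} by the standard prescription. Let σ_x := [[1,0],[0,√t·x]] and γ := [[0,1],[0,0]] in M₂(ℝ), and for 1 ≤ i ≤ n define b_{n,i} := σ_{μ(1,i)} ⊗ σ_{μ(2,i)} ⊗ … ⊗ σ_{μ(i−1,i)} ⊗ γ ⊗ σ₁^{⊗(n−i)} ∈ M₂(ℝ)^{⊗n} ≅ M_{2ⁿ}(ℝ), where * is the transpose and φ_n(a) := ⟨a e₀, e₀⟩ with e₀ the first standard basis vector of ℝ^{2ⁿ}. Then for every n, the elements b_{n,1}, …, b_{n,n} satisfy Condition (★) in (M_{2ⁿ}(ℝ),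 φ_n) with commutation coefficients {μ_{ε,ε'}(i,j)}: namely φ_n(b_{n,i}) = φ_n(b_{n,i}^*) = φ_n(b_{n,i} b_{n,i}) = φ_n(b_{n,i}^* b_{n,i}^*) = φ_n(b_{n,i}^* b_{n,i}) = 0 and φ_n(b_{n,i} b_{n,i}^*) = 1 for all i; the mixed moments of the b_{n,i} of each fixed length are uniformly bounded; φ_n factors over naturally ordered products in {b_{n,i}}; and b_{n,i}^ε b_{n,j}^{ε'} = μ_{ε',ε}(j,i) b_{n,j}^{ε'} b_{n,i}^ε for all i ≠ j in {1,…,n} and all ε, ε' ∈ {1,*}. -/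
open Filter MeasureTheory ProbabilityTheory
open scoped BigOperators ComplexOrder Classical

noncomputable section

/-!
Each `b_{n,i}` is an elementary tensor, so products, transposes and `φ_n` (the `(e₀, e₀)`
entry) are computed slot by slot. Outside its own slot `i`, `b_{n,i}` has diagonal factors
`diag(1, d)`, which do not affect the `(0,0)` entry of a product: a word in `b_{n,i}` has the
moment of the same word in `γ`, and in a naturally ordered product every slot sees at most one
non-diagonal block, whence the factorisation. For `i < j`, the only non-commuting slots are
`i` and `j`, where `γ` meets `σ_{μ(i,j)}` resp. `σ₁`, and `γ σ_x = √t x · σ_x γ`,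
`σ_x γ^* = √t x · γ^* σ_x`. Boundedness holds for any finite family of matrices, by
submultiplicativity of the `ℓ∞` operator norm.
-/

open Matrix

section KroneckerPi

variable {ι α R : Type*} [Fintype ι] [CommSemiring R]

def kroneckerPi (A : ι → Matrix α α R) : Matrix (ι → α) (ι → α) R :=
  Matrix.of fun x y => ∏ k, A k (x k) (y k)

@[simp]
lemma kroneckerPi_apply (A : ι → Matrix α α R) (x y : ι → α) :
    kroneckerPi A x y = ∏ k, A k (x k) (y k) := rfl

lemma kroneckerPi_mul [Fintype α] [DecidableEq ι] (A B : ι → Matrix α α R) :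
    kroneckerPi A * kroneckerPi B = kroneckerPi fun k => A k * B k := by
  ext x y
  simp only [mul_apply, kroneckerPi_apply, ← Finset.prod_mul_distrib]
  rw [Finset.prod_univ_sum, Fintype.piFinset_univ]

lemma kroneckerPi_one [DecidableEq α] :
    kroneckerPi (fun _ : ι => (1 : Matrix α α R)) = 1 := by
  ext x y
  simp only [kroneckerPi_apply, one_apply, Finset.prod_boole, funext_iff]
  simp

lemma kroneckerPi_transpose (A : ι → Matrix α α R) :
    (kroneckerPi A)ᵀ = kroneckerPi fun k => (A k)ᵀ := by
  ext x y
  simp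

lemma kroneckerPi_smul (c : ι → R) (A : ι → Matrix α α R) :
    kroneckerPi (fun k => c k • A k) = (∏ k, c k) • kroneckerPi A := by
  ext x y
  simp [Finset.prod_mul_distrib]

lemma list_prod_map_kroneckerPi [Fintype α] [DecidableEq ι] [DecidableEq α] {β : Type*}
    (A : β → ι → Matrix α α R) (l : List β) :
    (l.map fun b => kroneckerPi (A b)).prod = kroneckerPi fun k => (l.map fun b => A b k).prod := by
  induction l with
  | nil => exact kroneckerPi_one.symm
  | cons b l ih => simp only [List.map_cons, List.prod_cons, ih, kroneckerPi_mul]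

lemma kroneckerPi_mul_eq_smul_mul [Fintype α] [DecidableEq ι] {A B : ι → Matrix α α R}
    (c : ι → R) (h : ∀ k, A k * B k = c k • (B k * A k)) :
    kroneckerPi A * kroneckerPi B = (∏ k, c k) • (kroneckerPi B * kroneckerPi A) := by
  rw [kroneckerPi_mul, funext h, kroneckerPi_smul, kroneckerPi_mul]

end KroneckerPi

lemma sel_eq_transpose {α : Type*} (A : Matrix α α ℝ) (e : Bool) :
    sel A e = if e then Aᵀ else A := by
  cases e <;> simp [sel, star_eq_conjTranspose]

lemma sel_kroneckerPi {ι α : Type*} [Fintype ι] (A : ι → Matrix α α ℝ) (e : Bool) :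
    sel (kroneckerPi A) e = kroneckerPi fun k => sel (A k) e := by
  cases e <;> simp [sel_eq_transpose, kroneckerPi_transpose]

lemma list_prod_map_sel_kroneckerPi {ι α : Type*} [Fintype ι] [Fintype α] [DecidableEq ι]
    [DecidableEq α] (A : ι → Matrix α α ℝ) (w : List Bool) :
    (w.map (sel (kroneckerPi A))).prod = kroneckerPi fun k => (w.map (sel (A k))).prod := by
  rw [show sel (kroneckerPi A) = fun e => kroneckerPi fun k => sel (A k) e from
    funext (sel_kroneckerPi A)]
  exact list_prod_map_kroneckerPi _ w

section DiagOne

variable {R : Type*} [CommSemiring R]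

lemma mul_apply_fin_two (A B : Matrix (Fin 2) (Fin 2) R) (a b : Fin 2) :
    (A * B) a b = A a 0 * B 0 b + A a 1 * B 1 b := by
  simp [mul_apply, Fin.sum_univ_two]

variable (R) in
/-- The matrices `diag(1, d)`: they fix `e₀` from both sides, so they are invisible to the
`(0,0)` entry of a product. -/
def diagOneSubmonoid : Submonoid (Matrix (Fin 2) (Fin 2) R) where
  carrier := {A | A 0 0 = 1 ∧ A 0 1 = 0 ∧ A 1 0 = 0}
  mul_mem' := by
    rintro A B ⟨hA₀₀, hA₀₁, hA₁₀⟩ ⟨hB₀₀, hB₀₁, hB₁₀⟩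
    simp [mul_apply_fin_two, *]
  one_mem' := by simp

lemma mul_apply_zero_zero_of_mem_left {G : Matrix (Fin 2) (Fin 2) R}
    (hG : G ∈ diagOneSubmonoid R) (A : Matrix (Fin 2) (Fin 2) R) : (G * A) 0 0 = A 0 0 := by
  simp [mul_apply_fin_two, hG.1, hG.2.1]

lemma mul_apply_zero_zero_of_mem_right {G : Matrix (Fin 2) (Fin 2) R}
    (hG : G ∈ diagOneSubmonoid R) (A : Matrix (Fin 2) (Fin 2) R) : (A * G) 0 0 = A 0 0 := by
  simp [mul_apply_fin_two, hG.1, hG.2.2]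

lemma list_prod_apply_zero_zero {l : List (Matrix (Fin 2) (Fin 2) R)}
    (hl : l.Pairwise fun A B => A ∈ diagOneSubmonoid R ∨ B ∈ diagOneSubmonoid R) :
    l.prod 0 0 = (l.map fun A => A 0 0).prod := by
  induction l with
  | nil => simp
  | cons A l ih =>
    obtain ⟨hA, hl⟩ := List.pairwise_cons.mp hl
    rw [List.prod_cons, List.map_cons, List.prod_cons]
    by_cases hAS : A ∈ diagOneSubmonoid R
    · rw [mul_apply_zero_zero_of_mem_left hAS, ih hl, hAS.1, one_mul]
    · have hlS : ∀ B ∈ l, B ∈ diagOneSubmonoid R := fun B hB => (hA B hB).resolve_left hAS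
      rw [mul_apply_zero_zero_of_mem_right (Submonoid.list_prod_mem _ hlS),
        List.prod_eq_one fun a ha => ?_, mul_one]
      obtain ⟨B, hB, rfl⟩ := List.mem_map.mp ha
      exact (hlS B hB).1

end DiagOne

lemma phiM_kroneckerPi (n : ℕ) (A : Fin n → Matrix (Fin 2) (Fin 2) ℝ) :
    phiM n (kroneckerPi A) = ∏ k, A k 0 0 := rfl

section JordanWigner

variable (t : ℝ) (m : ℕ → ℕ → ℝ)

/-- The `k`-th tensor factor of `b_{n,i}`; slot `k : Fin n` stands for the paper's `k + 1`. -/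
def jwFactor (i : ℕ) {n : ℕ} (k : Fin n) : Matrix (Fin 2) (Fin 2) ℝ :=
  if (k : ℕ) + 1 < i then sigmaM t (m ((k : ℕ) + 1) i)
  else if (k : ℕ) + 1 = i then gammaM else sigmaM t 1

lemma jw_eq_kroneckerPi (n i : ℕ) : jw t m n i = kroneckerPi (jwFactor t m i) := rfl

lemma sigmaM_mem_diagOneSubmonoid (x : ℝ) : sigmaM t x ∈ diagOneSubmonoid ℝ := by
  simp [diagOneSubmonoid, sigmaM]

lemma sel_sigmaM (x : ℝ) (e : Bool) : sel (sigmaM t x) e = sigmaM t x := by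
  have hsymm : (sigmaM t x)ᵀ = sigmaM t x := by
    ext a b
    fin_cases a <;> fin_cases b <;> simp [sigmaM]
  cases e <;> simp [sel_eq_transpose, hsymm]

lemma jwFactor_eq_sigmaM {i n : ℕ} {k : Fin n} (hk : (k : ℕ) + 1 ≠ i) :
    ∃ x, jwFactor t m i k = sigmaM t x := by
  unfold jwFactor
  split_ifs
  exacts [⟨_, rfl⟩, ⟨1, rfl⟩]

lemma jwFactor_of_eq {i n : ℕ} {k : Fin n} (hk : (k : ℕ) + 1 = i) : jwFactor t m i k = gammaM := by
  simp [jwFactor, hk]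

lemma list_prod_map_sel_jwFactor_mem {i n : ℕ} {k : Fin n} (hk : (k : ℕ) + 1 ≠ i)
    (w : List Bool) : (w.map (sel (jwFactor t m i k))).prod ∈ diagOneSubmonoid ℝ := by
  obtain ⟨x, hx⟩ := jwFactor_eq_sigmaM t m hk
  refine Submonoid.list_prod_mem _ fun A hA => ?_
  obtain ⟨e, -, rfl⟩ := List.mem_map.mp hA
  rw [hx, sel_sigmaM]
  exact sigmaM_mem_diagOneSubmonoid t x

lemma phiM_list_prod_map_sel_jw {n i : ℕ} (hi : 1 ≤ i) (hin : i ≤ n) (w : List Bool) :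
    phiM n (w.map (sel (jw t m n i))).prod = (w.map (sel gammaM)).prod 0 0 := by
  have hslot : ((⟨i - 1, by omega⟩ : Fin n) : ℕ) + 1 = i := by simp only; omega
  rw [jw_eq_kroneckerPi, list_prod_map_sel_kroneckerPi, phiM_kroneckerPi,
    Finset.prod_eq_single (⟨i - 1, by omega⟩ : Fin n), jwFactor_of_eq t m hslot]
  · intro k _ hk
    refine (list_prod_map_sel_jwFactor_mem t m (fun h => hk (Fin.ext ?_)) w).1
    simp only; omega
  · simp

lemma phiM_prod_blocks_jw {n : ℕ} {L : List (ℕ × List Bool)}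
    (hL : L.Pairwise fun p q => p.1 ≠ q.1) :
    phiM n (L.map fun p => (p.2.map (sel (jw t m n p.1))).prod).prod
      = (L.map fun p => phiM n (p.2.map (sel (jw t m n p.1))).prod).prod := by
  simp only [jw_eq_kroneckerPi, list_prod_map_sel_kroneckerPi, list_prod_map_kroneckerPi,
    phiM_kroneckerPi]
  conv_rhs => rw [← Multiset.prod_coe, ← Multiset.map_coe, Multiset.prod_map_prod]
  simp only [Multiset.map_coe, Multiset.prod_coe]
  refine Finset.prod_congr rfl fun k _ => ?_
  rw [list_prod_apply_zero_zero, List.map_map]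
  · rfl
  refine List.Pairwise.map _ (fun p q hpq => ?_) hL
  by_cases hp : (k : ℕ) + 1 = p.1
  · exact .inr (list_prod_map_sel_jwFactor_mem t m (hp ▸ hpq) q.2)
  · exact .inl (list_prod_map_sel_jwFactor_mem t m hp p.2)

end JordanWigner

section Commutation

variable {t : ℝ}

lemma sel_gammaM_mul_sigmaM (ht : 0 < t) {x : ℝ} (hx : x ≠ 0) (e : Bool) :
    sel gammaM e * sigmaM t x
      = (if e then (Real.sqrt t * x)⁻¹ else Real.sqrt t * x) • (sigmaM t x * sel gammaM e) := by
  have hs : Real.sqrt t ≠ 0 := (Real.sqrt_pos.mpr ht).ne'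
  ext a b
  cases e <;> fin_cases a <;> fin_cases b <;>
    simp only [sel_eq_transpose, Bool.false_eq_true, if_true, if_false, mul_apply_fin_two,
      Matrix.smul_apply, transpose_apply] <;>
    simp [gammaM, sigmaM, mul_assoc, hs, hx]

lemma sigmaM_mul_sel_gammaM (ht : 0 < t) {x : ℝ} (hx : x ≠ 0) (e : Bool) :
    sigmaM t x * sel gammaM e
      = (if e then Real.sqrt t * x else (Real.sqrt t * x)⁻¹) • (sel gammaM e * sigmaM t x) := by
  have hsx : Real.sqrt t * x ≠ 0 := mul_ne_zero (Real.sqrt_pos.mpr ht).ne' hx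
  rw [sel_gammaM_mul_sigmaM ht hx, smul_smul]
  cases e <;> simp only [Bool.false_eq_true, if_true, if_false, inv_mul_cancel₀ hsx,
    mul_inv_cancel₀ hsx, one_smul]

lemma sigmaM_mul_comm (x y : ℝ) : sigmaM t x * sigmaM t y = sigmaM t y * sigmaM t x := by
  ext a b
  fin_cases a <;> fin_cases b <;> simp [mul_apply_fin_two, sigmaM, mul_comm]

lemma prescOne_inv (ht : 0 < t) (x : ℝ) (e e' : Bool) :
    (prescOne t x e e')⁻¹ = (if e then (Real.sqrt t * x)⁻¹ else Real.sqrt t * x) *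
      (if e' then Real.sqrt t else (Real.sqrt t)⁻¹) := by
  have hs : Real.sqrt t ≠ 0 := (Real.sqrt_pos.mpr ht).ne'
  cases e <;> cases e' <;> simp only [prescOne, inv_inv, if_true, if_false, Bool.false_eq_true]
  all_goals field_simp
  all_goals simp only [Real.sq_sqrt ht.le, mul_comm]

lemma prescOne_ne_zero (ht : 0 < t) {x : ℝ} (hx : x ≠ 0) (e e' : Bool) :
    prescOne t x e e' ≠ 0 := by
  cases e <;> cases e' <;> simp [prescOne, hx, ht.ne']

end Commutation

section JordanWignerCommutation

variable {t : ℝ} (ht : 0 < t) {m : ℕ → ℕ → ℝ}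
include ht

lemma sel_jwFactor_mul_sel_jwFactor {i j : ℕ} (hij : i < j) (hm : m i j ≠ 0) {n : ℕ} (k : Fin n)
    (e e' : Bool) :
    sel (jwFactor t m i k) e * sel (jwFactor t m j k) e'
      = (if (k : ℕ) + 1 = i then (if e then (Real.sqrt t * m i j)⁻¹ else Real.sqrt t * m i j)
          else if (k : ℕ) + 1 = j then (if e' then Real.sqrt t else (Real.sqrt t)⁻¹) else 1) •
        (sel (jwFactor t m j k) e' * sel (jwFactor t m i k) e) := by
  by_cases hki : (k : ℕ) + 1 = i
  · rw [jwFactor_of_eq t m hki, if_pos hki, jwFactor, if_pos (by omega), hki, sel_sigmaM]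
    exact sel_gammaM_mul_sigmaM ht hm e
  by_cases hkj : (k : ℕ) + 1 = j
  · rw [jwFactor_of_eq t m hkj, if_neg hki, if_pos hkj, jwFactor, if_neg (by omega), if_neg hki,
      sel_sigmaM]
    simpa using sigmaM_mul_sel_gammaM ht one_ne_zero e'
  obtain ⟨x, hx⟩ := jwFactor_eq_sigmaM t m hki
  obtain ⟨y, hy⟩ := jwFactor_eq_sigmaM t m hkj
  rw [if_neg hki, if_neg hkj, one_smul, hx, hy, sel_sigmaM, sel_sigmaM, sigmaM_mul_comm]

lemma sel_jw_mul_sel_jw_of_lt {n i j : ℕ} (hi : 1 ≤ i) (hij : i < j) (hjn : j ≤ n)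
    (hm : m i j ≠ 0) (e e' : Bool) :
    sel (jw t m n i) e * sel (jw t m n j) e'
      = (prescOne t (m i j) e e')⁻¹ • (sel (jw t m n j) e' * sel (jw t m n i) e) := by
  let a : Fin n := ⟨i - 1, by omega⟩
  let b : Fin n := ⟨j - 1, by omega⟩
  have ha : (a : ℕ) + 1 = i := by simp only [a]; omega
  have hb : (b : ℕ) + 1 = j := by simp only [b]; omega
  rw [jw_eq_kroneckerPi, jw_eq_kroneckerPi, sel_kroneckerPi, sel_kroneckerPi,
    kroneckerPi_mul_eq_smul_mul _ (sel_jwFactor_mul_sel_jwFactor ht hij hm · e e'),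
    Finset.prod_eq_mul_of_mem a b (Finset.mem_univ a) (Finset.mem_univ b)
      (by simp only [a, b, ne_eq, Fin.mk.injEq]; omega), prescOne_inv ht]
  · simp only [ha, hb, if_true, hij.ne', if_false]
  · intro k _ hk
    rw [if_neg fun h => hk.1 (Fin.ext (by simp only [a]; omega)),
      if_neg fun h => hk.2 (Fin.ext (by simp only [b]; omega))]

lemma sel_jw_mul_sel_jw (hm : ∀ i j : ℕ, i < j → m i j ≠ 0) {n i j : ℕ} (hi : 1 ≤ i)
    (hin : i ≤ n) (hj : 1 ≤ j) (hjn : j ≤ n) (hij : i ≠ j) (e e' : Bool) :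
    sel (jw t m n i) e * sel (jw t m n j) e'
      = presc t m e' e j i • (sel (jw t m n j) e' * sel (jw t m n i) e) := by
  rcases hij.lt_or_gt with hlt | hgt
  · rw [presc, if_neg (by omega), sel_jw_mul_sel_jw_of_lt ht hi hlt hjn (hm i j hlt)]
  · rw [presc, if_pos hgt, sel_jw_mul_sel_jw_of_lt ht hj hgt hin (hm j i hgt), smul_smul,
      mul_inv_cancel₀ (prescOne_ne_zero ht (hm j i hgt) e' e), one_smul]

end JordanWignerCommutation

section Bounded

attribute [local instance] Matrix.linftyOpNormedRing

lemma nnnorm_apply_le_linfty_opNNNorm {ι : Type*} [Fintype ι] (A : Matrix ι ι ℝ) (x y : ι) :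
    ‖A x y‖₊ ≤ ‖A‖₊ := by
  rw [linfty_opNNNorm_def]
  exact (Finset.single_le_sum (f := fun y => ‖A x y‖₊) (fun _ _ => zero_le)
    (Finset.mem_univ y)).trans (Finset.le_sup (f := fun x => ∑ y, ‖A x y‖₊) (Finset.mem_univ x))

lemma exists_abs_list_prod_apply_le {ι : Type*} [Fintype ι] [DecidableEq ι]
    (s : Finset (Matrix ι ι ℝ)) (r : ℕ) (x y : ι) :
    ∃ α : ℝ, 0 ≤ α ∧ ∀ l : List (Matrix ι ι ℝ), l.length = r → (∀ A ∈ l, A ∈ s) →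
      |l.prod x y| ≤ α := by
  have : Nonempty ι := ⟨x⟩
  refine ⟨(∑ A ∈ s, ‖A‖₊) ^ r, by positivity, fun l hl hls => ?_⟩
  have hK : ∀ a ∈ l.map nnnorm, a ≤ ∑ A ∈ s, ‖A‖₊ := by
    simp only [List.mem_map]
    rintro _ ⟨A, hA, rfl⟩
    exact Finset.single_le_sum (fun _ _ => zero_le) (hls A hA)
  have := (nnnorm_apply_le_linfty_opNNNorm l.prod x y).trans
    ((List.nnnorm_prod_le l).trans (List.prod_le_pow_card _ _ hK))
  rw [List.length_map, hl] at this
  exact_mod_cast this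

end Bounded

/-- the two-parameter Jordan–Wigner transform.  The matrices
`b_{n,1}, …, b_{n,n}` satisfy Condition (★) in `(M_{2ⁿ}(ℝ), φ_n)` with the commutation
coefficients given by the standard prescription: the listed second moments vanish,
`φ_n(b_{n,i} b_{n,i}^∗) = 1`, mixed moments of each fixed length are uniformly bounded,
`φ_n` factors over naturally ordered products, and the commutation relation holds. -/
theorem jordan_wigner_satisfies_star_condition
    (t : ℝ) (ht : 0 < t) (m : ℕ → ℕ → ℝ) (hm : ∀ i j : ℕ, i < j → m i j ≠ 0) (n : ℕ) :
    (∀ i : ℕ, 1 ≤ i → i ≤ n →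
      phiM n (jw t m n i) = 0 ∧ phiM n (star (jw t m n i)) = 0 ∧
      phiM n (jw t m n i * jw t m n i) = 0 ∧
      phiM n (star (jw t m n i) * star (jw t m n i)) = 0 ∧
      phiM n (star (jw t m n i) * jw t m n i) = 0 ∧
      phiM n (jw t m n i * star (jw t m n i)) = 1) ∧
    (∀ r : ℕ, ∃ α : ℝ, 0 ≤ α ∧ ∀ l : List (ℕ × Bool), l.length = r →
      (∀ p ∈ l, 1 ≤ p.1 ∧ p.1 ≤ n) →
      |phiM n ((l.map fun p => sel (jw t m n p.1) p.2).prod)| ≤ α) ∧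
    (∀ L : List (ℕ × List Bool),
      List.Chain' (· < ·) (L.map Prod.fst) →
      (∀ p ∈ L, (1 ≤ p.1 ∧ p.1 ≤ n) ∧ p.2 ≠ []) →
      phiM n ((L.map fun p => (p.2.map (sel (jw t m n p.1))).prod).prod)
        = (L.map fun p => phiM n ((p.2.map (sel (jw t m n p.1))).prod)).prod) ∧
    (∀ i j : ℕ, 1 ≤ i → i ≤ n → 1 ≤ j → j ≤ n → i ≠ j → ∀ e e' : Bool,
      sel (jw t m n i) e * sel (jw t m n j) e'
        = presc t m e' e j i • (sel (jw t m n j) e' * sel (jw t m n i) e)) := by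
  refine ⟨fun i hi hin => ?_, fun r => ?_, fun L hL _ => ?_,
    fun i j hi hin hj hjn hij => sel_jw_mul_sel_jw ht hm hi hin hj hjn hij⟩
  · have h := phiM_list_prod_map_sel_jw t m hi hin
    refine ⟨?_, ?_, ?_, ?_, ?_, ?_⟩
    · simpa [sel, mul_apply_fin_two, star_apply, gammaM] using h [false]
    · simpa [sel, mul_apply_fin_two, star_apply, gammaM] using h [true]
    · simpa [sel, mul_apply_fin_two, star_apply, gammaM] using h [false, false]
    · simpa [sel, mul_apply_fin_two, star_apply, gammaM] using h [true, true]
    · simpa [sel, mul_apply_fin_two, star_apply, gammaM] using h [true, false]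
    · simpa [sel, mul_apply_fin_two, star_apply, gammaM] using h [false, true]
  · obtain ⟨α, hα, hbound⟩ := exists_abs_list_prod_apply_le
      ((Finset.Icc 1 n ×ˢ Finset.univ).image fun p : ℕ × Bool => sel (jw t m n p.1) p.2)
      r (fun _ => 0) (fun _ => 0)
    refine ⟨α, hα, fun l hl hln => hbound _ (by rw [List.length_map, hl]) ?_⟩
    simp only [List.mem_map]
    rintro _ ⟨p, hp, rfl⟩
    exact Finset.mem_image_of_mem _ (by simpa using hln p hp)
  · refine phiM_prod_blocks_jw t m ?_
    exact (List.pairwise_map.mp (List.isChain_iff_pairwise.mp hL)).imp Nat.ne_of_lt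
end
end

section
/- Let (𝒜, φ) be a non-commutative probability space and let {b_i}_{i∈ℕ} satisfy Condition (★) with real nonzero commutation coefficients. Let r ∈ ℕ, ε(1),…,ε(r) ∈ {1,*}, and let V be a set partition of {1,…,r} containing a singleton block. Then for every tuple (i(1),…,i(r)) ∈ ℕ^r with (i(1),…,i(r)) ~ V, one has φ(b_{i(1)}^{ε(1)} ⋯ b_{i(r)}^{ε(r)}) = 0. -/
open Filter MeasureTheory ProbabilityTheory
open scoped BigOperators ComplexOrder Classical

noncomputable section

/-! Using the commutation relations, the word `b_{i(1)}^{ε(1)} ⋯ b_{i(r)}^{ε(r)}` is a scalar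
multiple of its stable sort by index; stability matters because only letters with distinct
indices may be swapped. The sorted word is naturally ordered, so `φ` factors over its blocks of
equal indices, and the block of the singleton index `m` contributes `φ(b_m) = 0` or
`φ(b_m^*) = 0`. -/

lemma listProd_cons {A : Type*} [Monoid A] [Star A] (b : ℕ → A) (p : ℕ × Bool)
    (l : List (ℕ × Bool)) : listProd b (p :: l) = sel (b p.1) p.2 * listProd b l := by
  simp [listProd]

section Reordering

variable {R A : Type*} [Monoid R] [Monoid A] [Star A] [MulAction R A] [IsScalarTower R A A]
  [SMulCommClass R A A] {b : ℕ → A}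

lemma exists_smul_listProd_orderedInsert
    (hb : ∀ i j, i ≠ j → ∀ e e', ∃ s : R,
      sel (b i) e * sel (b j) e' = s • (sel (b j) e' * sel (b i) e))
    (p : ℕ × Bool) (l : List (ℕ × Bool)) :
    ∃ s : R, sel (b p.1) p.2 * listProd b l
      = s • listProd b (l.orderedInsert (fun p q => p.1 ≤ q.1) p) := by
  induction l with
  | nil => exact ⟨1, by simp [listProd]⟩
  | cons q t ih =>
    rw [List.orderedInsert_cons]
    by_cases hle : p.1 ≤ q.1
    · exact ⟨1, by rw [if_pos hle, one_smul, listProd_cons b p]⟩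
    · obtain ⟨s, hs⟩ := ih
      obtain ⟨s', hs'⟩ := hb p.1 q.1 (by omega) p.2 q.2
      refine ⟨s' * s, ?_⟩
      rw [if_neg hle, listProd_cons, listProd_cons, ← mul_assoc, hs', smul_mul_assoc, mul_assoc,
        hs, mul_smul_comm, smul_smul]

lemma exists_smul_listProd_insertionSort
    (hb : ∀ i j, i ≠ j → ∀ e e', ∃ s : R,
      sel (b i) e * sel (b j) e' = s • (sel (b j) e' * sel (b i) e))
    (l : List (ℕ × Bool)) :
    ∃ s : R, listProd b l = s • listProd b (l.insertionSort fun p q => p.1 ≤ q.1) := by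
  induction l with
  | nil => exact ⟨1, by simp⟩
  | cons p t ih =>
    obtain ⟨s, hs⟩ := ih
    obtain ⟨s', hs'⟩ := exists_smul_listProd_orderedInsert hb p
      (t.insertionSort fun p q => p.1 ≤ q.1)
    exact ⟨s * s', by
      rw [List.insertionSort_cons, listProd_cons, hs, mul_smul_comm, hs', smul_smul]⟩

end Reordering

lemma exists_blocks_of_pairwise (l : List (ℕ × Bool)) (hl : l.Pairwise fun p q => p.1 ≤ q.1) :
    ∃ L : List (ℕ × List Bool), (L.map Prod.fst).IsChain (· < ·) ∧ (∀ p ∈ L, p.2 ≠ []) ∧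
      L.flatMap (fun p => p.2.map (p.1, ·)) = l := by
  induction l with
  | nil => exact ⟨[], by simp⟩
  | cons p t ih =>
    obtain ⟨hp, ht⟩ := List.pairwise_cons.1 hl
    obtain ⟨L, hchain, hne, rfl⟩ := ih ht
    match L, hne with
    | [], _ => exact ⟨[(p.1, [p.2])], by simp⟩
    | (j, []) :: L, hne => exact absurd rfl (hne (j, []) (by simp))
    | (j, e :: es) :: L, hne =>
      by_cases h : p.1 = j
      · refine ⟨(j, p.2 :: e :: es) :: L, hchain, ?_, by simp [← h]⟩
        simpa using hne
      · have hlt : p.1 < j := lt_of_le_of_ne (hp (j, e) (by simp)) h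
        exact ⟨(p.1, [p.2]) :: (j, e :: es) :: L, List.IsChain.cons_cons hlt hchain,
          by simpa using hne, by simp⟩

lemma listProd_flatMap {A : Type*} [Monoid A] [Star A] (b : ℕ → A) (L : List (ℕ × List Bool)) :
    listProd b (L.flatMap fun p => p.2.map (p.1, ·))
      = (L.map fun p => (p.2.map (sel (b p.1))).prod).prod := by
  induction L with
  | nil => simp [listProd]
  | cons q L ih => simp_all [listProd, Function.comp_def]

lemma exists_singleton_mem_of_countP_flatMap_eq_one {L : List (ℕ × List Bool)}
    (hne : ∀ p ∈ L, p.2 ≠ []) {m : ℕ}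
    (hm : (L.flatMap fun p => p.2.map (p.1, ·)).countP (·.1 = m) = 1) :
    ∃ e, (m, [e]) ∈ L := by
  obtain ⟨a, ha, ham⟩ := List.countP_pos_iff.1 (hm ▸ Nat.one_pos)
  obtain ⟨⟨j, es⟩, hq, haq⟩ := List.mem_flatMap.1 ha
  obtain rfl : j = m := by
    obtain ⟨e, -, rfl⟩ := List.mem_map.1 haq
    simpa using ham
  have hlen : es.length ≤ 1 := by
    rw [← hm, List.countP_flatMap]
    refine le_of_eq_of_le ?_ (List.le_sum_of_mem (List.mem_map_of_mem hq))
    simp [Function.comp_def]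
  match es, hne _ hq, hlen with
  | [e], _, _ => exact ⟨e, hq⟩

theorem StarCond.map_listProd_eq_zero_of_countP_eq_one {A : Type*} [Ring A] [StarRing A]
    [Algebra ℂ A] {φ : A →ₗ[ℂ] ℂ} {b : ℕ → A} {c : Bool → Bool → ℕ → ℕ → ℝ}
    (hcond : StarCond φ b c) {l : List (ℕ × Bool)} {m : ℕ} (hm : l.countP (·.1 = m) = 1) :
    φ (listProd b l) = 0 := by
  obtain ⟨s, hs⟩ := exists_smul_listProd_insertionSort (R := ℂ)
    (fun i j hij e e' => ⟨_, hcond.commRel i j hij e e'⟩) l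
  obtain ⟨L, hchain, hne, hL⟩ := exists_blocks_of_pairwise _ (List.pairwise_insertionSort _ l)
  obtain ⟨e, he⟩ := exists_singleton_mem_of_countP_flatMap_eq_one hne (m := m)
    (by rw [hL, (List.perm_insertionSort _ l).countP_eq, hm])
  rw [hs, map_smul, ← hL, listProd_flatMap, hcond.factors L hchain hne, List.prod_eq_zero,
    smul_zero]
  refine List.mem_map.2 ⟨_, he, ?_⟩
  cases e
  · simpa [sel] using hcond.zero_mean m
  · simpa [sel] using hcond.zero_mean_star m

lemma List.countP_ofFn_eq_one {α : Type*} {r : ℕ} {f : Fin r → α} {p : α → Bool} {k : Fin r}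
    (h : ∀ j, p (f j) ↔ j = k) : (List.ofFn f).countP p = 1 := by
  rw [List.ofFn_eq_map, List.countP_map]
  calc _ = (List.finRange r).count k := List.countP_congr fun j _ => by simp [h j]
    _ = 1 := List.count_eq_one_of_mem (List.nodup_finRange r) (List.mem_finRange k)

lemma Finpartition.eq_of_mem_of_singleton_mem_parts {α : Type*} [DecidableEq α] {s : Finset α}
    (P : Finpartition s) {k j : α} (hk : {k} ∈ P.parts) {B : Finset α} (hB : B ∈ P.parts)
    (hjB : j ∈ B) (hkB : k ∈ B) : j = k :=
  Finset.mem_singleton.1 (P.eq_of_mem_parts hB hk hkB (Finset.mem_singleton_self k) ▸ hjB)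

lemma tupProd_eq_listProd_ofFn {A : Type*} [Monoid A] [Star A] (b : ℕ → A) {r : ℕ}
    (i : Fin r → ℕ) (eps : Fin r → Bool) :
    tupProd b i eps = listProd b (List.ofFn fun j => (i j, eps j)) := by
  simp only [tupProd, listProd, List.map_ofFn]
  rfl

theorem moment_vanishes_of_singleton_block_general {A : Type*} [Ring A] [StarRing A] [Algebra ℂ A]
    (φ : A →ₗ[ℂ] ℂ)
    (b : ℕ → A) (c : Bool → Bool → ℕ → ℕ → ℝ)
    (hcond : StarCond φ b c)
    (r : ℕ) (eps : Fin r → Bool)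
    (P : Finpartition (Finset.univ : Finset (Fin r)))
    (k : Fin r) (hk : {k} ∈ P.parts)
    (i : Fin r → ℕ)
    (hi : ∀ k₁ k₂ : Fin r, i k₁ = i k₂ ↔ ∃ B ∈ P.parts, k₁ ∈ B ∧ k₂ ∈ B) :
    φ (tupProd b i eps) = 0 := by
  have hsingle (j : Fin r) : i j = i k ↔ j = k := by
    refine ⟨fun h => ?_, fun h => h ▸ rfl⟩
    obtain ⟨B, hB, hjB, hkB⟩ := (hi j k).1 h
    exact P.eq_of_mem_of_singleton_mem_parts hk hB hjB hkB
  rw [tupProd_eq_listProd_ofFn]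
  exact hcond.map_listProd_eq_zero_of_countP_eq_one
    (List.countP_ofFn_eq_one fun j => by simpa using hsingle j)

/-- if the set partition `P` of `{1,…,r}` contains a singleton block, then
`φ(b_{i(1)}^{ε(1)} ⋯ b_{i(r)}^{ε(r)}) = 0` for every tuple `i ∼ P`. -/
theorem moment_vanishes_of_singleton_block {A : Type*} [Ring A] [StarRing A] [Algebra ℂ A]
    [StarModule ℂ A]
    (φ : A →ₗ[ℂ] ℂ) (hφ1 : φ 1 = 1) (hpos : ∀ a : A, 0 ≤ φ (a * star a))
    (b : ℕ → A) (c : Bool → Bool → ℕ → ℕ → ℝ)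
    (hnz : NonzeroCoeff c) (hcond : StarCond φ b c)
    (r : ℕ) (eps : Fin r → Bool)
    (P : Finpartition (Finset.univ : Finset (Fin r)))
    (k : Fin r) (hk : {k} ∈ P.parts)
    (i : Fin r → ℕ)
    (hi : ∀ k₁ k₂ : Fin r, i k₁ = i k₂ ↔ ∃ B ∈ P.parts, k₁ ∈ B ∧ k₂ ∈ B) :
    φ (tupProd b i eps) = 0 :=
  moment_vanishes_of_singleton_block_general φ b c hcond r eps P k hk i hi
end
end

section
/- Let (𝒜, φ) be a non-commutative probability space and let {b_i}_{i∈ℕ} satisfy Condition (★) with real nonzero commutation coefficients satisfying relations (A)–(B). Let n ∈ ℕ, let V = {(w_1,z_1),…,(w_n,z_n)} ∈ 𝒫₂(2n) be a pair partition, let (i(1),…,i(2n)) ∈ ℕ^{2n} with (i(1),…,i(2n)) ~ V, and let ε(1),…,ε(2n) ∈ {1,*} with ε(w_j) ≠ ε(z_j) for each j. Then φ(b_{i(1)}^{ε(1)} ⋯ b_{i(2n)}^{ε(2n)}) = β · Π_{j=1}^{n} φ(b_{i(w_j)}^{ε(w_j)} b_{i(z_j)}^{ε(z_j)}), where β = [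 Π_{(w_j,w_k,z_j,z_k) ∈ Cross(V)} μ_{ε(z_j),ε(w_k)}(i(z_j),i(w_k)) ] · [ Π_{(w_j,w_m,z_m,z_j) ∈ Nest(V)} μ_{ε(z_j),ε(z_m)}(i(z_j),i(z_m)) · μ_{ε(z_j),ε(w_m)}(i(z_j),i(w_m)) ]. -/
open Filter MeasureTheory ProbabilityTheory
open scoped BigOperators ComplexOrder Classical

noncomputable section

/-! Order the blocks by their left ends and let `(w, z)` be the first one. The letter at `z` is
moved left past every letter strictly between `w` and `z`; these carry indices different from
`i(z)`, so each swap costs one commutation coefficient, and the coefficients paid are exactly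
those that `β` attaches to the crossings and nestings in which `(w, z)` is the outer or left
block. What remains is the first pair followed by the word of the other blocks, so induction
over the blocks writes the word as `β` times the ordered product of the pairs. Pairs with
different indices commute, because relation (B) makes the four coefficients of a pair–pair
swap cancel; so the pairs can be sorted by index, and then `φ` factors over them. -/

section SkewCommute

variable {R A : Type*} [CommMonoid R] [Monoid A] [MulAction R A]

def SkewCommute (k : R) (x y : A) : Prop := x * y = k • (y * x)

theorem SkewCommute.commute {x y : A} (h : SkewCommute (1 : R) x y) : Commute x y :=
  h.trans (one_smul R _)

variable [IsScalarTower R A A] [SMulCommClass R A A] {k₁ k₂ : R}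

theorem SkewCommute.mul_left {x₁ x₂ y : A} (h₁ : SkewCommute k₁ x₁ y)
    (h₂ : SkewCommute k₂ x₂ y) : SkewCommute (k₁ * k₂) (x₁ * x₂) y := by
  unfold SkewCommute at *
  rw [mul_assoc, h₂, mul_smul_comm, ← mul_assoc, h₁, smul_mul_assoc, smul_smul, mul_comm,
    mul_assoc]

theorem SkewCommute.mul_right {x y₁ y₂ : A} (h₁ : SkewCommute k₁ x y₁)
    (h₂ : SkewCommute k₂ x y₂) : SkewCommute (k₁ * k₂) x (y₁ * y₂) := by
  unfold SkewCommute at *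
  rw [← mul_assoc, h₁, smul_mul_assoc, mul_assoc, h₂, mul_smul_comm, smul_smul, mul_assoc]

end SkewCommute

section SortedProd

variable {ι A : Type*} [LinearOrder ι] [Monoid A] (ℓ : ι → A)

def sortedProd (s : Finset ι) : A := ((s.sort (· ≤ ·)).map ℓ).prod

theorem sortedProd_empty : sortedProd ℓ ∅ = 1 := by
  simp [sortedProd]

theorem sortedProd_insert_of_lt {a : ι} {s : Finset ι} (h : ∀ x ∈ s, a < x) :
    sortedProd ℓ (insert a s) = ℓ a * sortedProd ℓ s := by
  rw [sortedProd, Finset.sort_insert _ (fun x hx => (h x hx).le) (fun ha => lt_irrefl a (h a ha))]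
  rfl

theorem sortedProd_univ {n : ℕ} (ℓ : Fin n → A) :
    sortedProd ℓ Finset.univ = (List.ofFn ℓ).prod := by
  rw [sortedProd, Fin.sort_univ, List.ofFn_eq_map]

theorem sortedProd_insert_of_skewCommute {R : Type*} [CommMonoid R] [MulAction R A]
    [IsScalarTower R A A] [SMulCommClass R A A] (κ : ι → R) {y : ι} {s : Finset ι}
    (hy : y ∉ s) (h : ∀ x ∈ s, x < y → SkewCommute (κ x) (ℓ x) (ℓ y)) :
    sortedProd ℓ (insert y s) = (∏ x ∈ s with x < y, κ x) • (ℓ y * sortedProd ℓ s) := by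
  induction s using Finset.induction_on_min with
  | empty => simp [sortedProd]
  | insert a s ha ih =>
    have has : a ∉ s := fun h => lt_irrefl a (ha a h)
    rcases lt_or_gt_of_ne (ne_of_mem_of_not_mem (Finset.mem_insert_self a s) hy) with hay | hya
    · have hfilter : (insert a s).filter (· < y) = insert a (s.filter (· < y)) := by
        rw [Finset.filter_insert, if_pos hay]
      rw [Finset.insert_comm, sortedProd_insert_of_lt ℓ (by simpa using ⟨hay, ha⟩),
        ih (fun h => hy (Finset.mem_insert_of_mem h))
          (fun x hx => h x (Finset.mem_insert_of_mem hx)),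
        sortedProd_insert_of_lt ℓ ha, hfilter,
        Finset.prod_insert (fun h => has (Finset.mem_filter.1 h).1), mul_smul_comm,
        ← mul_assoc, ← mul_assoc, h a (Finset.mem_insert_self a s) hay, smul_mul_assoc,
        smul_smul, mul_comm (κ a), mul_assoc]
    · have hfilter : (insert a s).filter (· < y) = ∅ :=
        Finset.filter_eq_empty_iff.2 fun x hx hxy => by
          rcases Finset.mem_insert.1 hx with rfl | hx
          exacts [lt_asymm hya hxy, lt_asymm (hya.trans (ha x hx)) hxy]
      rw [sortedProd_insert_of_lt ℓ (by simpa using ⟨hya, fun x hx => hya.trans (ha x hx)⟩),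
        hfilter, Finset.prod_empty, one_smul]

end SortedProd

theorem prod_prod_insert_of_forall_lt {ι M : Type*} [LinearOrder ι] [CommMonoid M]
    {g : ι → ι → M} (hg : ∀ j k, k ≤ j → g j k = 1) {a : ι} {s : Finset ι}
    (h : ∀ x ∈ s, a < x) :
    ∏ j ∈ insert a s, ∏ k ∈ insert a s, g j k = (∏ k ∈ s, g a k) * ∏ j ∈ s, ∏ k ∈ s, g j k := by
  have ha : a ∉ s := fun h' => lt_irrefl a (h a h')
  rw [Finset.prod_insert ha, Finset.prod_insert ha, hg a a le_rfl, one_mul]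
  refine congrArg _ (Finset.prod_congr rfl fun j hj => ?_)
  rw [Finset.prod_insert ha, hg j a (h j hj).le, one_mul]

namespace PairPartition

variable {n : ℕ} (V : PairPartition n)

theorem w_ne_z (j k : Fin n) : V.w j ≠ V.z k := fun h => by
  simpa using V.bij.injective (a₁ := (j, false)) (a₂ := (k, true)) (by simpa using h)

theorem z_injective : Function.Injective V.z := fun j k h => by
  simpa using V.bij.injective (a₁ := (j, true)) (a₂ := (k, true)) (by simpa using h)

theorem mem_crossSet {j k : Fin n} :
    (j, k) ∈ crossSet V ↔ V.w j < V.w k ∧ V.w k < V.z j ∧ V.z j < V.z k := by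
  simp [crossSet]

theorem mem_nestSet {j k : Fin n} :
    (j, k) ∈ nestSet V ↔ V.w j < V.w k ∧ V.w k < V.z k ∧ V.z k < V.z j := by
  simp [nestSet]

def positions (B : Finset (Fin n)) : Finset (Fin (2 * n)) :=
  B.biUnion fun k => {V.w k, V.z k}

theorem mem_positions {B : Finset (Fin n)} {p : Fin (2 * n)} :
    p ∈ V.positions B ↔ ∃ k ∈ B, p = V.w k ∨ p = V.z k := by
  simp [positions]

theorem positions_insert (a : Fin n) (B : Finset (Fin n)) :
    V.positions (insert a B) = insert (V.w a) (insert (V.z a) (V.positions B)) := by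
  simp [positions, Finset.biUnion_insert, Finset.insert_union]

theorem w_mem_positions {a : Fin n} {B : Finset (Fin n)} : V.w a ∈ V.positions B ↔ a ∈ B := by
  simp [mem_positions, V.mono.injective.eq_iff, V.w_ne_z]

theorem z_mem_positions {a : Fin n} {B : Finset (Fin n)} : V.z a ∈ V.positions B ↔ a ∈ B := by
  simp [mem_positions, V.z_injective.eq_iff, (V.w_ne_z _ _).symm]

theorem positions_univ : V.positions Finset.univ = Finset.univ := by
  refine Finset.eq_univ_of_forall fun p => ?_
  obtain ⟨⟨k, _ | _⟩, rfl⟩ := V.bij.surjective p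
  exacts [V.w_mem_positions.2 (Finset.mem_univ k), V.z_mem_positions.2 (Finset.mem_univ k)]

theorem w_lt_of_mem_positions {a : Fin n} {B : Finset (Fin n)} (hB : ∀ k ∈ B, a < k)
    {p : Fin (2 * n)} (hp : p ∈ V.positions B) : V.w a < p := by
  obtain ⟨k, hk, rfl | rfl⟩ := V.mem_positions.1 hp
  exacts [V.mono (hB k hk), (V.mono (hB k hk)).trans (V.wz k)]

/-- The positions of `B` to the left of `z a` are the left ends of the blocks crossing `a`
and both ends of the blocks nested in `a`. -/
theorem prod_positions_filter_lt_z {M : Type*} [CommMonoid M] (f : Fin (2 * n) → M)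
    {a : Fin n} {B : Finset (Fin n)} (hB : ∀ k ∈ B, a < k) :
    ∏ p ∈ V.positions B with p < V.z a, f p =
      ∏ k ∈ B, (if (a, k) ∈ crossSet V then f (V.w k) else 1) *
        (if (a, k) ∈ nestSet V then f (V.z k) * f (V.w k) else 1) := by
  have hdisj : (B : Set (Fin n)).PairwiseDisjoint fun k => ({V.w k, V.z k} : Finset _) := by
    intro j _ k _ hjk
    simp [Function.onFun, V.w_ne_z, (V.w_ne_z _ _).symm, V.mono.injective.ne hjk.symm,
      V.z_injective.ne hjk.symm]
  rw [Finset.prod_filter, positions, Finset.prod_biUnion hdisj]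
  refine Finset.prod_congr rfl fun k hk => ?_
  have hak := V.mono (hB k hk)
  have hwz := V.wz k
  have hzz : V.z k ≠ V.z a := V.z_injective.ne (hB k hk).ne'
  simp only [Finset.prod_pair (V.w_ne_z k k), mem_crossSet, mem_nestSet]
  rcases lt_or_gt_of_ne hzz with hlt | hgt
  · simp [hak, hwz, hlt, hwz.trans hlt, lt_asymm hlt, mul_comm]
  · rcases lt_or_gt_of_ne (V.w_ne_z k a) with hlt' | hgt'
    · simp [hak, hwz, hgt, hlt', lt_asymm hgt]
    · simp [hak, hwz, hgt, lt_asymm hgt', lt_asymm (hgt'.trans hwz)]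

end PairPartition

theorem tupleEquiv.apply_w_eq_apply_z {n : ℕ} {V : PairPartition n} {i : Fin (2 * n) → ℕ}
    (hiV : tupleEquiv V i) (j : Fin n) : i (V.w j) = i (V.z j) :=
  (hiV _ _).2 (Or.inr ⟨j, Or.inl ⟨rfl, rfl⟩⟩)

theorem tupleEquiv.injective_comp_w {n : ℕ} {V : PairPartition n} {i : Fin (2 * n) → ℕ}
    (hiV : tupleEquiv V i) : Function.Injective (i ∘ V.w) := fun j k h => by
  rcases (hiV _ _).1 h with h | ⟨m, ⟨-, h⟩ | ⟨h, -⟩⟩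
  exacts [V.mono.injective h, absurd h (V.w_ne_z k m), absurd h (V.w_ne_z j m)]

theorem tupleEquiv.apply_ne_apply_z {n : ℕ} {V : PairPartition n} {i : Fin (2 * n) → ℕ}
    (hiV : tupleEquiv V i) {a : Fin n} {B : Finset (Fin n)} (ha : a ∉ B) {p : Fin (2 * n)}
    (hp : p ∈ V.positions B) : i p ≠ i (V.z a) := fun h => by
  rcases (hiV _ _).1 h with rfl | ⟨m, ⟨rfl, hm⟩ | ⟨-, hm⟩⟩
  · exact ha (V.z_mem_positions.1 hp)
  · rw [← V.z_injective hm] at hp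
    exact ha (V.w_mem_positions.1 hp)
  · exact V.w_ne_z m a hm.symm

theorem RelAB.prod_four_eq_one {c : Bool → Bool → ℕ → ℕ → ℝ} (hAB : RelAB c)
    (hnz : NonzeroCoeff c) {i j : ℕ} (hij : i ≠ j) {e e' f f' : Bool} (he : e ≠ e')
    (hf : f ≠ f') : c f e i j * c f e' i j * (c f' e i j * c f' e' i j) = 1 := by
  have h₁ := hnz i j hij true true
  have h₂ := hnz i j hij true false
  cases e <;> cases e' <;> cases f <;> cases f' <;> simp only [ne_eq, not_true_eq_false] at he hf
    <;> rw [hAB.2.1 i j hij, hAB.2.2 i j hij] <;> field_simp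

namespace StarCond

variable {A : Type*} [Ring A] [StarRing A] [Algebra ℂ A] {φ : A →ₗ[ℂ] ℂ} {b : ℕ → A}
  {c : Bool → Bool → ℕ → ℕ → ℝ}

theorem skewCommute (hcond : StarCond φ b c) {i j : ℕ} (hij : i ≠ j) (e e' : Bool) :
    SkewCommute ((c e' e j i : ℝ) : ℂ) (sel (b i) e) (sel (b j) e') :=
  hcond.commRel i j hij e e'

theorem commute_pair_pair (hcond : StarCond φ b c) (hnz : NonzeroCoeff c) (hAB : RelAB c)
    {i j : ℕ} (hij : i ≠ j) {e e' f f' : Bool} (he : e ≠ e') (hf : f ≠ f') :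
    Commute (sel (b i) e * sel (b i) e') (sel (b j) f * sel (b j) f') := by
  have h := ((hcond.skewCommute hij e f).mul_left (hcond.skewCommute hij e' f)).mul_right
    ((hcond.skewCommute hij e f').mul_left (hcond.skewCommute hij e' f'))
  norm_cast at h
  rw [hAB.prod_four_eq_one hnz hij.symm he hf, Complex.ofReal_one] at h
  exact h.commute

/-- `factors` only asks for blocks in increasing order of their indices; pairwise commuting
blocks can be sorted into that order. -/
theorem map_prod_of_pairwise_commute (hcond : StarCond φ b c) (L : List (ℕ × List Bool))
    (hidx : L.Pairwise fun p q => p.1 ≠ q.1) (hne : ∀ p ∈ L, p.2 ≠ [])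
    (hcomm : L.Pairwise fun p q =>
      Commute (p.2.map (sel (b p.1))).prod (q.2.map (sel (b q.1))).prod) :
    φ ((L.map fun p => (p.2.map (sel (b p.1))).prod).prod)
      = (L.map fun p => φ ((p.2.map (sel (b p.1))).prod)).prod := by
  let r : ℕ × List Bool → ℕ × List Bool → Prop := fun p q => p.1 ≤ q.1
  have hperm : (L.insertionSort r).Perm L := List.perm_insertionSort r L
  have hsorted : (L.insertionSort r).Pairwise fun p q => p.1 < q.1 :=
    ((List.pairwise_insertionSort r L).and ((hperm.pairwise_iff Ne.symm).2 hidx)).imp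
      fun h => lt_of_le_of_ne h.1 h.2
  rw [(hperm.symm.map _).prod_eq' (List.pairwise_map.2 hcomm), ← (hperm.map _).prod_eq,
    hcond.factors _ ((List.isChain_map Prod.fst).2 hsorted.isChain)
      fun p hp => hne p (hperm.subset hp)]

theorem map_prod_pairs (hcond : StarCond φ b c) (hnz : NonzeroCoeff c) (hAB : RelAB c)
    {n : ℕ} {idx : Fin n → ℕ} (hidx : Function.Injective idx) {e e' : Fin n → Bool}
    (he : ∀ j, e j ≠ e' j) :
    φ (List.ofFn fun j => sel (b (idx j)) (e j) * sel (b (idx j)) (e' j)).prod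
      = ∏ j, φ (sel (b (idx j)) (e j) * sel (b (idx j)) (e' j)) := by
  have h := hcond.map_prod_of_pairwise_commute (List.ofFn fun j => (idx j, [e j, e' j]))
    (List.pairwise_ofFn.2 fun j k hjk => hidx.ne hjk.ne) (by simp)
    (List.pairwise_ofFn.2 fun j k hjk => by
      simpa using hcond.commute_pair_pair hnz hAB (hidx.ne hjk.ne) (he j) (he k))
  simpa [List.map_ofFn, Function.comp_def, List.prod_ofFn] using h

end StarCond

section Coefficients

variable {n : ℕ} (V : PairPartition n) (eps : Fin (2 * n) → Bool) (c : Bool → Bool → ℕ → ℕ → ℝ)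
  (i : Fin (2 * n) → ℕ)

/-- The coefficient paid when the letter at `z j` moves left past the letter at `p`. -/
def swapCoeff (j : Fin n) (p : Fin (2 * n)) : ℝ := c (eps (V.z j)) (eps p) (i (V.z j)) (i p)

def blockCoeff (j k : Fin n) : ℝ :=
  (if (j, k) ∈ crossSet V then swapCoeff V eps c i j (V.w k) else 1) *
    (if (j, k) ∈ nestSet V then swapCoeff V eps c i j (V.z k) * swapCoeff V eps c i j (V.w k)
      else 1)

theorem blockCoeff_eq_one_of_le {j k : Fin n} (h : k ≤ j) : blockCoeff V eps c i j k = 1 := by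
  have h' := V.mono.monotone h
  simp [blockCoeff, V.mem_crossSet, V.mem_nestSet, not_lt.2 h']

theorem betaProd_eq_prod_blockCoeff :
    betaProd n V eps c i = ∏ j, ∏ k, blockCoeff V eps c i j k := by
  simp only [← Fintype.prod_prod_type', blockCoeff]
  rw [Finset.prod_mul_distrib, ← Finset.prod_filter, ← Finset.prod_filter, Finset.filter_univ_mem,
    Finset.filter_univ_mem]
  rfl

end Coefficients

theorem sortedProd_positions {A : Type*} [Ring A] [StarRing A] [Algebra ℂ A] {φ : A →ₗ[ℂ] ℂ}
    {b : ℕ → A} {c : Bool → Bool → ℕ → ℕ → ℝ} (hcond : StarCond φ b c) {n : ℕ}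
    {V : PairPartition n} {i : Fin (2 * n) → ℕ} (hiV : tupleEquiv V i)
    (eps : Fin (2 * n) → Bool) (B : Finset (Fin n)) :
    sortedProd (fun p => sel (b (i p)) (eps p)) (V.positions B)
      = ((∏ j ∈ B, ∏ k ∈ B, blockCoeff V eps c i j k : ℝ) : ℂ) •
        sortedProd (fun j => sel (b (i (V.w j))) (eps (V.w j)) *
          sel (b (i (V.z j))) (eps (V.z j))) B := by
  induction B using Finset.induction_on_min with
  | empty => simp [PairPartition.positions, sortedProd_empty]
  | insert a B hB ih =>
    have haB : a ∉ B := fun h => lt_irrefl a (hB a h)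
    have hmove := sortedProd_insert_of_skewCommute _ (fun p => (swapCoeff V eps c i a p : ℂ))
      (fun h => haB (V.z_mem_positions.1 h))
      fun p hp _ => hcond.skewCommute (hiV.apply_ne_apply_z haB hp) _ _
    have hw : ∀ p ∈ insert (V.z a) (V.positions B), V.w a < p := by
      simpa using ⟨V.wz a, fun p => V.w_lt_of_mem_positions hB⟩
    have hcoeff : ∏ k ∈ B, blockCoeff V eps c i a k
        = ∏ p ∈ V.positions B with p < V.z a, swapCoeff V eps c i a p :=
      (V.prod_positions_filter_lt_z _ hB).symm
    rw [V.positions_insert, sortedProd_insert_of_lt _ hw, hmove, ih, sortedProd_insert_of_lt _ hB,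
      prod_prod_insert_of_forall_lt (fun _ _ => blockCoeff_eq_one_of_le V eps c i) hB, hcoeff]
    push_cast
    simp only [mul_smul_comm, smul_smul, mul_assoc]

theorem moment_factors_over_pairs_general {A : Type*} [Ring A] [StarRing A] [Algebra ℂ A]
    (φ : A →ₗ[ℂ] ℂ)
    (b : ℕ → A) (c : Bool → Bool → ℕ → ℕ → ℝ)
    (hnz : NonzeroCoeff c) (hAB : RelAB c) (hcond : StarCond φ b c)
    (n : ℕ) (V : PairPartition n)
    (i : Fin (2 * n) → ℕ) (hiV : tupleEquiv V i)
    (eps : Fin (2 * n) → Bool) (heps : ∀ j : Fin n, eps (V.w j) ≠ eps (V.z j)) :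
    φ (tupProd b i eps)
      = ((betaProd n V eps c i : ℝ) : ℂ) *
        ∏ j : Fin n, φ (sel (b (i (V.w j))) (eps (V.w j)) * sel (b (i (V.z j))) (eps (V.z j))) := by
  have hword :
      tupProd b i eps = sortedProd (fun p => sel (b (i p)) (eps p)) (V.positions .univ) := by
    rw [V.positions_univ, sortedProd_univ, tupProd]
  rw [hword, sortedProd_positions hcond hiV, ← betaProd_eq_prod_blockCoeff, map_smul,
    smul_eq_mul, sortedProd_univ]
  simp only [← hiV.apply_w_eq_apply_z]
  exact congrArg _ (hcond.map_prod_pairs hnz hAB hiV.injective_comp_w heps)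

/-- for a tuple `i ∼ V` with `ε(w_j) ≠ ε(z_j)` on each block,
the mixed moment factors over the pairs, up to the coefficient `β` collecting
one commutation coefficient per crossing and two per nesting of `V`. -/
theorem moment_factors_over_pairs {A : Type*} [Ring A] [StarRing A] [Algebra ℂ A]
    [StarModule ℂ A]
    (φ : A →ₗ[ℂ] ℂ) (hφ1 : φ 1 = 1) (hpos : ∀ a : A, 0 ≤ φ (a * star a))
    (b : ℕ → A) (c : Bool → Bool → ℕ → ℕ → ℝ)
    (hnz : NonzeroCoeff c) (hAB : RelAB c) (hcond : StarCond φ b c)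
    (n : ℕ) (V : PairPartition n)
    (i : Fin (2 * n) → ℕ) (hiV : tupleEquiv V i)
    (eps : Fin (2 * n) → Bool) (heps : ∀ j : Fin n, eps (V.w j) ≠ eps (V.z j)) :
    φ (tupProd b i eps)
      = ((betaProd n V eps c i : ℝ) : ℂ) *
        ∏ j : Fin n, φ (sel (b (i (V.w j))) (eps (V.w j)) * sel (b (i (V.z j))) (eps (V.z j))) :=
  moment_factors_over_pairs_general φ b c hnz hAB hcond n V i hiV eps heps
end
end
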